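/- For every z ∈ ℂ, one has |1 − √(1−z²)| ≤ |1 + √(1−|z|²)| ≤ |1 + √(1−z²)|, where √(1−|z|²) denotes the principal complex square root of the real number 1−|z|² (purely imaginary when |z| > 1). -/

import Mathlib

noncomputable def csqrt (z : ℂ) : ℂ := z ^ (1 / 2 : ℂ)

lemma csqrt_eq (z : ℂ) : csqrt z = z ^ (2⁻¹ : ℂ) := by
  unfold csqrt; norm_num

lemma csqrt_sq (z : ℂ) : csqrt z ^ 2 = z := by
  have h := Complex.cpow_nat_inv_pow z (n := 2) two_ne_zero
  rw [csqrt_eq]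
  have : ((2 : ℕ) : ℂ) = (2 : ℂ) := by norm_num
  rw [this] at h
  exact h

lemma csqrt_re (z : ℂ) : (csqrt z).re = Real.sqrt ((‖z‖ + z.re) / 2) := by
  rw [csqrt_eq]; exact Complex.cpow_inv_two_re z

lemma csqrt_im_sq (z : ℂ) : (csqrt z).im ^ 2 = (‖z‖ - z.re) / 2 := by
  have h := Complex.abs_cpow_inv_two_im z
  rw [← csqrt_eq] at h
  have h2 : (csqrt z).im ^ 2 = |(csqrt z).im| ^ 2 := (sq_abs _).symm
  rw [h2, h, Real.sq_sqrt]
  have := Complex.abs_re_le_norm z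
  have := abs_le.mp (Complex.abs_re_le_norm z)
  linarith [this.1]

lemma abs_one_add_csqrt_sq (u : ℂ) :
    ‖1 + csqrt u‖ ^ 2
      = 1 + ‖u‖ + 2 * Real.sqrt ((‖u‖ + u.re) / 2) := by
  have hre := csqrt_re u
  have him := csqrt_im_sq u
  rw [← Complex.normSq_eq_norm_sq, Complex.normSq_apply]
  have h1 : (1 + csqrt u).re = 1 + (csqrt u).re := by simp
  have h2 : (1 + csqrt u).im = (csqrt u).im := by simp
  rw [h1, h2]
  have hsq : (csqrt u).re ^ 2 = (‖u‖ + u.re) / 2 := by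
    rw [hre, Real.sq_sqrt]
    have := abs_le.mp (Complex.abs_re_le_norm u)
    linarith [this.2]
  nlinarith [hsq, him, hre]

lemma abs_one_sub_csqrt_sq (u : ℂ) :
    ‖1 - csqrt u‖ ^ 2
      = 1 + ‖u‖ - 2 * Real.sqrt ((‖u‖ + u.re) / 2) := by
  have hre := csqrt_re u
  have him := csqrt_im_sq u
  rw [← Complex.normSq_eq_norm_sq, Complex.normSq_apply]
  have h1 : (1 - csqrt u).re = 1 - (csqrt u).re := by simp
  have h2 : (1 - csqrt u).im = -(csqrt u).im := by simp
  rw [h1, h2]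
  have hsq : (csqrt u).re ^ 2 = (‖u‖ + u.re) / 2 := by
    rw [hre, Real.sq_sqrt]
    have := abs_le.mp (Complex.abs_re_le_norm u)
    linarith [this.2]
  nlinarith [hsq, him, hre]

/-- Inequality (6.1): for every `z ∈ ℂ`,
`|1 − √(1−z²)| ≤ |1 + √(1−|z|²)| ≤ |1 + √(1−z²)|`. -/
theorem stmt3 (z : ℂ) :
    ‖1 - csqrt (1 - z ^ 2)‖ ≤
      ‖1 + csqrt ((1 - (‖z‖) ^ 2 : ℝ) : ℂ)‖ ∧
    ‖1 + csqrt ((1 - (‖z‖) ^ 2 : ℝ) : ℂ)‖ ≤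
      ‖1 + csqrt (1 - z ^ 2)‖ := by
  set R : ℝ := ‖z‖ with hR
  set u : ℂ := 1 - z ^ 2 with hu
  set x : ℂ := ((1 - R ^ 2 : ℝ) : ℂ) with hx
  set w : ℂ := csqrt u with hw
  set m : ℂ := csqrt x with hm
  have habsx : ‖x‖ = |1 - R ^ 2| := by rw [hx, Complex.norm_real, Real.norm_eq_abs]
  have hxre : x.re = 1 - R ^ 2 := by rw [hx, Complex.ofReal_re]
  have habsz2 : ‖z ^ 2‖ = R ^ 2 := by rw [norm_pow]
  have ha1 : 1 - R ^ 2 ≤ ‖u‖ := by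
    have := norm_sub_norm_le (1 : ℂ) (z ^ 2)
    simpa [habsz2] using this
  have ha2 : R ^ 2 - 1 ≤ ‖u‖ := by
    have := norm_sub_norm_le (z ^ 2) (1 : ℂ)
    have h2 : ‖z ^ 2 - 1‖ = ‖u‖ := by
      rw [hu]; exact norm_sub_rev _ _
    simpa [habsz2, h2] using this
  have hure : 1 - R ^ 2 ≤ u.re := by
    have h1 : u.re = 1 - (z ^ 2).re := by simp [hu]
    have h2 : (z ^ 2).re ≤ R ^ 2 := by
      have := Complex.re_le_norm (z ^ 2)
      simpa [habsz2] using this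
    linarith
  -- the three squared norms
  have hMsq := abs_one_add_csqrt_sq x
  have hNsq := abs_one_add_csqrt_sq u
  have hM'sq := abs_one_sub_csqrt_sq x
  have hN'sq := abs_one_sub_csqrt_sq u
  rw [← hm] at hMsq hM'sq
  rw [← hw] at hNsq hN'sq
  -- right inequality on squares
  have hsq_right : ‖1 + m‖ ^ 2 ≤ ‖1 + w‖ ^ 2 := by
    rw [hMsq, hNsq, habsx, hxre]
    rcases le_or_gt (R ^ 2) 1 with hcase | hcase
    · have habs : |1 - R ^ 2| = 1 - R ^ 2 := abs_of_nonneg (by linarith)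
      rw [habs]
      have hinner : (1 - R ^ 2 + (1 - R ^ 2)) / 2 ≤ (‖u‖ + u.re) / 2 := by
        linarith
      have := Real.sqrt_le_sqrt hinner
      linarith
    · have habs : |1 - R ^ 2| = R ^ 2 - 1 := by
        rw [abs_of_nonpos (by linarith)]; ring
      rw [habs]
      have hz : (R ^ 2 - 1 + (1 - R ^ 2)) / 2 = 0 := by ring
      rw [hz, Real.sqrt_zero]
      have := Real.sqrt_nonneg ((‖u‖ + u.re) / 2)
      linarith
  have hright : ‖1 + m‖ ≤ ‖1 + w‖ := by
    have h1 := norm_nonneg (1 + m)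
    have h2 := norm_nonneg (1 + w)
    nlinarith
  refine ⟨?_, hright⟩
  -- left inequality
  have key1 : ‖1 - w‖ * ‖1 + w‖ = R ^ 2 := by
    rw [← norm_mul]
    have : (1 - w) * (1 + w) = z ^ 2 := by
      have hw2 : w ^ 2 = u := by rw [hw]; exact csqrt_sq u
      have : (1 - w) * (1 + w) = 1 - w ^ 2 := by ring
      rw [this, hw2, hu]; ring
    rw [this, habsz2]
  have key2 : ‖1 - m‖ * ‖1 + m‖ = R ^ 2 := by
    rw [← norm_mul]
    have : (1 - m) * (1 + m) = ((R ^ 2 : ℝ) : ℂ) := by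
      have hm2 : m ^ 2 = x := by rw [hm]; exact csqrt_sq x
      have h : (1 - m) * (1 + m) = 1 - m ^ 2 := by ring
      rw [h, hm2, hx]
      push_cast
      ring
    rw [this, Complex.norm_real, Real.norm_eq_abs, abs_of_nonneg (sq_nonneg R)]
  have key3 : ‖1 - m‖ ≤ ‖1 + m‖ := by
    have hs := Real.sqrt_nonneg ((‖x‖ + x.re) / 2)
    have h1 := norm_nonneg (1 - m)
    have h2 := norm_nonneg (1 + m)
    nlinarith [hMsq, hM'sq]
  have hpos : 0 < ‖1 + w‖ := by
    have h1 : (0:ℝ) ≤ (csqrt u).re := by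
      rw [csqrt_re]; exact Real.sqrt_nonneg _
    have h2 : (1 + w).re = 1 + w.re := by simp
    have h3 := Complex.re_le_norm (1 + w)
    rw [h2] at h3
    rw [hw] at *
    linarith
  have : ‖1 - w‖ * ‖1 + w‖ ≤ ‖1 + m‖ * ‖1 + w‖ := by
    rw [key1]
    calc R ^ 2 = ‖1 - m‖ * ‖1 + m‖ := key2.symm
      _ ≤ ‖1 + m‖ * ‖1 + m‖ :=
          mul_le_mul_of_nonneg_right key3 (norm_nonneg _)
      _ ≤ ‖1 + m‖ * ‖1 + w‖ :=
          mul_le_mul_of_nonneg_left hright (norm_nonneg _)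
  exact le_of_mul_le_mul_right this hpos
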